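/- The complete bipartite graph K_{2,n−2} with n ≥ 7 satisfies η_p(K_{2,n−2}) = n − 2 and β_p(K_{2,n−2}) = n − 2. -/

import Mathlib

open SimpleGraph Set

/-- Distance from a vertex to a set of vertices. -/
noncomputable def pDist {V : Type*} (G : SimpleGraph V) (v : V) (S : Set V) : ℕ :=
  sInf (G.dist v '' S)

/-- A family of sets of vertices is resolving if every pair of distinct vertices
is distinguished by its distance to some part. -/
def IsResolvingFam {V : Type*} (G : SimpleGraph V) (P : Set (Set V)) : Prop :=
  ∀ u v : V, u ≠ v → ∃ S ∈ P, pDist G u S ≠ pDist G v S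

/-- A family of sets is dominating if every vertex is at distance exactly 1 from some part. -/
def IsDominatingFam {V : Type*} (G : SimpleGraph V) (P : Set (Set V)) : Prop :=
  ∀ v : V, ∃ S ∈ P, pDist G v S = 1

/-- The partition domination number: minimum cardinality of a dominating partition. -/
noncomputable def gammaP {V : Type*} (G : SimpleGraph V) : ℕ :=
  sInf {k | ∃ P : Set (Set V), Setoid.IsPartition P ∧ IsDominatingFam G P ∧ P.ncard = k}

/-- The partition dimension: minimum cardinality of a resolving partition. -/
noncomputable def betaP {V : Type*} (G : SimpleGraph V) : ℕ :=
  sInf {k | ∃ P : Set (Set V), Setoid.IsPartition P ∧ IsResolvingFam G P ∧ P.ncard = k}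

/-- The dominating partition dimension: minimum cardinality of a resolving dominating partition. -/
noncomputable def etaP {V : Type*} (G : SimpleGraph V) : ℕ :=
  sInf {k | ∃ P : Set (Set V), Setoid.IsPartition P ∧ IsResolvingFam G P ∧
    IsDominatingFam G P ∧ P.ncard = k}

/-- A resolving set of vertices. -/
def IsResolvingSet {V : Type*} (G : SimpleGraph V) (S : Set V) : Prop :=
  ∀ u v : V, u ≠ v → ∃ x ∈ S, G.dist u x ≠ G.dist v x

/-- A dominating set of vertices. -/
def IsDominatingSet {V : Type*} (G : SimpleGraph V) (S : Set V) : Prop :=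
  ∀ v : V, v ∉ S → ∃ u ∈ S, G.Adj u v

/-- The resolving domination number η(G). -/
noncomputable def etaNum {V : Type*} (G : SimpleGraph V) : ℕ :=
  sInf {k | ∃ S : Set V, IsResolvingSet G S ∧ IsDominatingSet G S ∧ S.ncard = k}

/-- A twin set: pairwise twin vertices. -/
def IsTwinSet {V : Type*} (G : SimpleGraph V) (W : Set V) : Prop :=
  ∀ u ∈ W, ∀ v ∈ W, ∀ w : V, w ≠ u → w ≠ v → G.dist u w = G.dist v w

/-- The join of two graphs. -/
def gJoin {α β : Type*} (G : SimpleGraph α) (H : SimpleGraph β) : SimpleGraph (α ⊕ β) :=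
  SimpleGraph.fromRel (fun x y =>
    (∃ a b, x = Sum.inl a ∧ y = Sum.inl b ∧ G.Adj a b) ∨
    (∃ a b, x = Sum.inr a ∧ y = Sum.inr b ∧ H.Adj a b) ∨
    (∃ a b, x = Sum.inl a ∧ y = Sum.inr b))

/-- The disjoint union of two graphs. -/
def gUnion {α β : Type*} (G : SimpleGraph α) (H : SimpleGraph β) : SimpleGraph (α ⊕ β) :=
  SimpleGraph.fromRel (fun x y =>
    (∃ a b, x = Sum.inl a ∧ y = Sum.inl b ∧ G.Adj a b) ∨
    (∃ a b, x = Sum.inr a ∧ y = Sum.inr b ∧ H.Adj a b))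

section Aux

open Sum

abbrev KG (m : ℕ) := completeBipartiteGraph (Fin 2) (Fin m)

variable {m : ℕ}

lemma dist_lr (a : Fin 2) (b : Fin m) : (KG m).dist (inl a) (inr b) = 1 :=
  SimpleGraph.dist_eq_one_iff_adj.mpr (by simp)

lemma dist_rl (a : Fin 2) (b : Fin m) : (KG m).dist (inr b) (inl a) = 1 :=
  SimpleGraph.dist_eq_one_iff_adj.mpr (by simp)

lemma dist_ll [NeZero m] {a b : Fin 2} (h : a ≠ b) :
    (KG m).dist (inl a) (inl b) = 2 := by
  have h1 : (KG m).Adj (inl a) (inr (0 : Fin m)) := by simp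
  have h2 : (KG m).Adj (inr (0 : Fin m)) (inl b) := by simp
  have w : (KG m).Walk (inl a) (inl b) :=
    SimpleGraph.Walk.cons h1 (SimpleGraph.Walk.cons h2 SimpleGraph.Walk.nil)
  have hle : (KG m).dist (inl a) (inl b) ≤ 2 := by
    simpa using SimpleGraph.dist_le
      (SimpleGraph.Walk.cons h1 (SimpleGraph.Walk.cons h2 SimpleGraph.Walk.nil))
  have h0 : (KG m).dist (inl a) (inl b) ≠ 0 := by
    rw [ne_eq, SimpleGraph.dist_eq_zero_iff_eq_or_not_reachable]
    push_neg
    exact ⟨by simpa using h, w.reachable⟩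
  have h1 : (KG m).dist (inl a) (inl b) ≠ 1 := by
    rw [ne_eq, SimpleGraph.dist_eq_one_iff_adj]
    simp
  omega

lemma dist_rr {a b : Fin m} (h : a ≠ b) :
    (KG m).dist (inr a) (inr b) = 2 := by
  have h1 : (KG m).Adj (inr a) (inl (0 : Fin 2)) := by simp
  have h2 : (KG m).Adj (inl (0 : Fin 2)) (inr b) := by simp
  have w : (KG m).Walk (inr a) (inr b) :=
    SimpleGraph.Walk.cons h1 (SimpleGraph.Walk.cons h2 SimpleGraph.Walk.nil)
  have hle : (KG m).dist (inr a) (inr b) ≤ 2 := by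
    simpa using SimpleGraph.dist_le
      (SimpleGraph.Walk.cons h1 (SimpleGraph.Walk.cons h2 SimpleGraph.Walk.nil))
  have h0 : (KG m).dist (inr a) (inr b) ≠ 0 := by
    rw [ne_eq, SimpleGraph.dist_eq_zero_iff_eq_or_not_reachable]
    push_neg
    exact ⟨by simpa using h, w.reachable⟩
  have h1 : (KG m).dist (inr a) (inr b) ≠ 1 := by
    rw [ne_eq, SimpleGraph.dist_eq_one_iff_adj]
    simp
  omega

lemma kgDist_ne_zero [NeZero m] {x y : Fin 2 ⊕ Fin m} (h : x ≠ y) :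
    (KG m).dist x y ≠ 0 := by
  cases x with
  | inl a => cases y with
    | inl b =>
      rw [dist_ll (by rintro rfl; exact h rfl)]; omega
    | inr b => rw [dist_lr]; omega
  | inr a => cases y with
    | inl b => rw [dist_rl]; omega
    | inr b =>
      rw [dist_rr (by rintro rfl; exact h rfl)]; omega

lemma pDist_eq_zero_of_mem {V : Type*} (G : SimpleGraph V) {v : V} {S : Set V}
    (h : v ∈ S) : pDist G v S = 0 :=
  Nat.sInf_eq_zero.mpr (Or.inl ⟨v, h, G.dist_self⟩)

lemma pDist_singleton {V : Type*} (G : SimpleGraph V) (v w : V) :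
    pDist G v {w} = G.dist v w := by
  simp [pDist]

lemma pDist_pos [NeZero m] {v : Fin 2 ⊕ Fin m} {S : Set (Fin 2 ⊕ Fin m)}
    (hS : S.Nonempty) (hv : v ∉ S) : pDist (KG m) v S ≠ 0 := by
  intro h0
  obtain ⟨w, hw, hd⟩ := Nat.sInf_mem (hS.image ((KG m).dist v))
  rw [show sInf ((KG m).dist v '' S) = pDist (KG m) v S from rfl, h0] at hd
  exact kgDist_ne_zero (by rintro rfl; exact hv hw) hd

lemma pDist_eq_one [NeZero m] {v : Fin 2 ⊕ Fin m} {S : Set (Fin 2 ⊕ Fin m)}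
    (hv : v ∉ S) {w : Fin 2 ⊕ Fin m} (hw : w ∈ S) (hd : (KG m).dist v w = 1) :
    pDist (KG m) v S = 1 := by
  have h1 : pDist (KG m) v S ≤ 1 := Nat.sInf_le ⟨w, hw, hd⟩
  have h0 : pDist (KG m) v S ≠ 0 := pDist_pos ⟨w, hw⟩ hv
  omega

lemma pDist_eq_two [NeZero m] {v : Fin 2 ⊕ Fin m} {S : Set (Fin 2 ⊕ Fin m)}
    (hv : v ∉ S) (hS : S.Nonempty) (hno : ∀ w ∈ S, ¬ (KG m).Adj v w) :
    pDist (KG m) v S = 2 := by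
  obtain ⟨w, hw, hd⟩ := Nat.sInf_mem (hS.image ((KG m).dist v))
  have hvw : v ≠ w := by rintro rfl; exact hv hw
  have : (KG m).dist v w = 2 := by
    cases v with
    | inl a => cases w with
      | inl b => exact dist_ll (by rintro rfl; exact hvw rfl)
      | inr b => exact absurd (by simp : (KG m).Adj (inl a) (inr b)) (hno _ hw)
    | inr a => cases w with
      | inl b => exact absurd (by simp : (KG m).Adj (inr a) (inl b)) (hno _ hw)
      | inr b => exact dist_rr (by rintro rfl; exact hvw rfl)
  rw [show sInf ((KG m).dist v '' S) = pDist (KG m) v S from rfl] at hd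
  omega

/-- Twin property for right vertices. -/
lemma pDist_twin {a b : Fin m} {S : Set (Fin 2 ⊕ Fin m)}
    (ha : (inr a : Fin 2 ⊕ Fin m) ∉ S) (hb : (inr b : Fin 2 ⊕ Fin m) ∉ S) :
    pDist (KG m) (inr a) S = pDist (KG m) (inr b) S := by
  unfold pDist
  congr 1
  apply Set.image_congr
  intro w hw
  cases w with
  | inl c => rw [dist_rl, dist_rl]
  | inr c =>
    rw [dist_rr (by rintro rfl; exact ha hw), dist_rr (by rintro rfl; exact hb hw)]

/-- Lower bound: any resolving partition has at least m parts. -/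
lemma lower_bound [NeZero m] {P : Set (Set (Fin 2 ⊕ Fin m))}
    (hP : Setoid.IsPartition P) (hR : IsResolvingFam (KG m) P) : m ≤ P.ncard := by
  have hex : ∀ i : Fin m, ∃ S, (S ∈ P ∧ (inr i : Fin 2 ⊕ Fin m) ∈ S) ∧
      ∀ T ∈ P, (inr i : Fin 2 ⊕ Fin m) ∈ T → T = S := by
    intro i
    obtain ⟨S, hS, hu⟩ := hP.2 (inr i)
    exact ⟨S, hS, fun T hT hiT => hu T ⟨hT, hiT⟩⟩
  choose g hg hgu using hex
  have hginj : Function.Injective g := by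
    intro a b hab
    by_contra hne
    have hne' : (inr a : Fin 2 ⊕ Fin m) ≠ inr b := by simpa using hne
    obtain ⟨S, hS, hd⟩ := hR (inr a) (inr b) hne'
    by_cases haS : (inr a : Fin 2 ⊕ Fin m) ∈ S
    · have : S = g a := hgu a S hS haS
      have hbS : (inr b : Fin 2 ⊕ Fin m) ∈ S := by
        rw [this, hab]; exact (hg b).2
      exact hd (by rw [pDist_eq_zero_of_mem _ haS, pDist_eq_zero_of_mem _ hbS])
    · by_cases hbS : (inr b : Fin 2 ⊕ Fin m) ∈ S
      · have : S = g b := hgu b S hS hbS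
        exact haS (by rw [this, ← hab]; exact (hg a).2)
      · exact hd (pDist_twin haS hbS)
  have hsub : Set.range g ⊆ P := by rintro S ⟨i, rfl⟩; exact (hg i).1
  calc m = (Set.range g).ncard := by
        rw [← Set.image_univ, Set.ncard_image_of_injective _ hginj, Set.ncard_univ]
        simp
    _ ≤ P.ncard := Set.ncard_le_ncard hsub (Set.toFinite P)

/-- Upper bound construction. -/
lemma construction (hm : 5 ≤ m) :
    ∃ P : Set (Set (Fin 2 ⊕ Fin m)), Setoid.IsPartition P ∧ IsResolvingFam (KG m) P ∧
      IsDominatingFam (KG m) P ∧ P.ncard = m := by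
  haveI : NeZero m := ⟨by omega⟩
  set f : Fin 2 ⊕ Fin m → Fin m :=
    Sum.elim (fun a => (⟨a.val, by omega⟩ : Fin m)) id with hf
  have hfval : ∀ a : Fin 2, (f (inl a)).val = a.val := fun a => rfl
  refine ⟨Set.range (fun i => f ⁻¹' {i}), ?_, ?_, ?_, ?_⟩
  · constructor
    · rintro ⟨i, hi⟩
      have h2 : (inr i : Fin 2 ⊕ Fin m) ∈ f ⁻¹' {i} := rfl
      rw [show f ⁻¹' {i} = (∅ : Set (Fin 2 ⊕ Fin m)) from hi] at h2
      exact h2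
    · intro x
      refine ⟨f ⁻¹' {f x}, ⟨⟨f x, rfl⟩, rfl⟩, ?_⟩
      rintro S ⟨⟨i, rfl⟩, hx⟩
      have : f x = i := hx
      rw [this]
  · -- resolving
    intro u v huv
    by_cases h : f u = f v
    · -- the hard case: u, v on opposite sides with same color
      have key : ∀ (a : Fin 2) (b : Fin m), f (inl a) = f (inr b) →
          ∃ S ∈ Set.range (fun i => f ⁻¹' {i}),
            pDist (KG m) (inl a : Fin 2 ⊕ Fin m) S ≠ pDist (KG m) (inr b) S := by
        intro a b heq
        have hb : b.val = a.val := by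
          have := congrArg Fin.val heq
          rw [hfval, show f (inr b) = b from rfl] at this; exact this.symm
        set k : Fin m := ⟨2, by omega⟩ with hk
        have hkval : k.val = 2 := by rw [hk]
        have hSk : f ⁻¹' {k} = {(inr k : Fin 2 ⊕ Fin m)} := by
          ext x
          cases x with
          | inl c =>
            simp only [Set.mem_preimage, Set.mem_singleton_iff]
            constructor
            · intro hc
              exfalso
              have h3 := congrArg Fin.val hc
              rw [hfval, hkval] at h3
              omega
            · intro hc; exact absurd hc (by simp)
          | inr c =>
            simp only [Set.mem_preimage, Set.mem_singleton_iff, Sum.inr.injEq]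
            exact ⟨fun hc => by rw [show f (inr c) = c from rfl] at hc; rw [hc],
              fun hc => by rw [show f (inr c) = c from rfl, hc]⟩
        refine ⟨f ⁻¹' {k}, ⟨k, rfl⟩, ?_⟩
        rw [hSk, pDist_singleton, pDist_singleton, dist_lr,
          dist_rr (by intro hbk; rw [hbk, hkval] at hb; omega)]
        omega
      cases u with
      | inl a => cases v with
        | inl b =>
          exfalso
          apply huv
          have : a.val = b.val := by
            have := congrArg Fin.val h
            rwa [hfval, hfval] at this
          rw [Fin.ext this]
        | inr b => exact key a b h
      | inr a => cases v with
        | inl b =>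
          obtain ⟨S, hS, hd⟩ := key b a h.symm
          exact ⟨S, hS, hd.symm⟩
        | inr b =>
          exfalso
          apply huv
          rw [show f (inr a) = a from rfl, show f (inr b) = b from rfl] at h
          rw [h]
    · refine ⟨f ⁻¹' {f u}, ⟨f u, rfl⟩, ?_⟩
      rw [pDist_eq_zero_of_mem (KG m) (show u ∈ f ⁻¹' {f u} from rfl)]
      have h0 : pDist (KG m) v (f ⁻¹' {f u}) ≠ 0 :=
        pDist_pos ⟨u, show u ∈ f ⁻¹' {f u} from rfl⟩
          (by intro hv; exact h (show f v = f u from hv).symm)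
      exact fun hc => h0 hc.symm
  · -- dominating
    intro v
    cases v with
    | inl a =>
      set k : Fin m := ⟨2, by omega⟩ with hk
      have hkval : k.val = 2 := by rw [hk]
      refine ⟨f ⁻¹' {k}, ⟨k, rfl⟩, ?_⟩
      apply pDist_eq_one (w := inr k)
      · intro hc
        have h3 : f (inl a) = k := hc
        have h4 := congrArg Fin.val h3
        rw [hfval, hkval] at h4
        omega
      · rfl
      · exact dist_lr a k
    | inr b =>
      set i : Fin 2 := if b.val = 0 then 1 else 0 with hi
      refine ⟨f ⁻¹' {f (inl i)}, ⟨f (inl i), rfl⟩, ?_⟩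
      apply pDist_eq_one (w := inl i)
      · intro hc
        have : f (inr b) = f (inl i) := hc
        have hv := congrArg Fin.val this
        rw [hfval] at hv
        rw [show f (inr b) = b from rfl] at hv
        by_cases hb0 : b.val = 0 <;> simp [hi, hb0] at hv
      · rfl
      · exact dist_rl i b
  · -- ncard
    have hginj : Function.Injective (fun i : Fin m => f ⁻¹' {i}) := by
      intro i j hij
      have hij' : f ⁻¹' {i} = f ⁻¹' {j} := hij
      have h2 : (inr i : Fin 2 ⊕ Fin m) ∈ f ⁻¹' {j} := by
        rw [← hij']; rfl
      exact h2
    rw [← Set.image_univ, Set.ncard_image_of_injective _ hginj, Set.ncard_univ]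
    simp

end Aux

theorem stmt_18 (n : ℕ) (hn : 7 ≤ n) :
    etaP (completeBipartiteGraph (Fin 2) (Fin (n - 2))) = n - 2 ∧
    betaP (completeBipartiteGraph (Fin 2) (Fin (n - 2))) = n - 2 := by
  set m := n - 2 with hmdef
  have hm : 5 ≤ m := by omega
  haveI : NeZero m := ⟨by omega⟩
  obtain ⟨P, hPart, hRes, hDom, hcard⟩ := construction hm
  constructor
  · apply le_antisymm
    · exact Nat.sInf_le ⟨P, hPart, hRes, hDom, hcard⟩
    · unfold etaP
      refine le_csInf ⟨m, P, hPart, hRes, hDom, hcard⟩ ?_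
      rintro k ⟨Q, hQP, hQR, -, rfl⟩
      exact lower_bound hQP hQR
  · apply le_antisymm
    · exact Nat.sInf_le ⟨P, hPart, hRes, hcard⟩
    · unfold betaP
      refine le_csInf ⟨m, P, hPart, hRes, hcard⟩ ?_
      rintro k ⟨Q, hQP, hQR, rfl⟩
      exact lower_bound hQP hQR
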